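/- Let A be a positive operator on H, U an A-unitary operator (i.e., U admits an A-adjoint U^{♯} with U^{♯}U = (U^{♯})^{♯}U^{♯} = P_A, the projection onto the closure of R(A)), and T an A-bounded operator. Then r_A(TU ± UT) ≤ ‖T‖_A + ‖T²‖_A^{1/2}. -/

import Mathlib

/-!
Since `A P_A = A`, the relations `A U^♯ = U^* A` and `U^♯ U = P_A` give `U^* A U = A`, so `U` is
an `A`-isometry. For `S = TU + ζ UT` with `|ζ| ≤ 1` we have `S^{n+1} x = S^n T (U x) + ζ S^n U (T x)`,
so with `a = ‖T‖_A` and `b² ≥ ‖T²‖_A` the pair `(‖S^n‖_A, ‖S^n T‖_A)` is dominated by the iterates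
of the matrix `[[a, 1], [b², a]]`, whose spectral radius is `a + b`. Taking `n`-th roots gives
`r_A(S) ≤ a + b`; the signs `ζ = ±1` are the two claims.
-/

open ContinuousLinearMap

variable {H : Type*} [NormedAddCommGroup H] [InnerProductSpace ℂ H] [CompleteSpace H]

/-- The seminorm `‖x‖_A = ‖A^{1/2} x‖ = √⟨Ax, x⟩` induced by a positive operator `A`. -/
noncomputable def anorm (A : H →L[ℂ] H) (x : H) : ℝ :=
  Real.sqrt (A.reApplyInnerSelf x)

/-- `T` is `A`-bounded: `‖Tx‖_A ≤ c ‖x‖_A` for some `c > 0`. -/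
def ABounded (A T : H →L[ℂ] H) : Prop :=
  ∃ c : ℝ, 0 < c ∧ ∀ x : H, anorm A (T x) ≤ c * anorm A x

/-- The operator seminorm `‖T‖_A`: the least `c ≥ 0` with `‖Tx‖_A ≤ c ‖x‖_A` for all `x`. -/
noncomputable def aNorm (A T : H →L[ℂ] H) : ℝ :=
  sInf {c : ℝ | 0 ≤ c ∧ ∀ x : H, anorm A (T x) ≤ c * anorm A x}

/-- The `A`-spectral radius `r_A(T) = inf_{n ≥ 1} ‖T^n‖_A^{1/n}`. -/
noncomputable def aSpecRad (A T : H →L[ℂ] H) : ℝ :=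
  ⨅ n : ℕ+, aNorm A (T ^ (n : ℕ)) ^ ((n : ℝ)⁻¹)

/-- The `A`-numerical radius `ω_A(T) = sup {|⟨ATx, x⟩| : ‖x‖_A = 1}`. -/
noncomputable def aNumRad (A T : H →L[ℂ] H) : ℝ :=
  sSup {c : ℝ | ∃ x : H, anorm A x = 1 ∧ c = ‖(inner ℂ (A (T x)) x : ℂ)‖}

/-- The orthogonal projection `P_A` of `H` onto the closure of the range of `A`. -/
noncomputable def projA (A : H →L[ℂ] H) : H →L[ℂ] H :=
  haveI : CompleteSpace ((LinearMap.range (A : H →ₗ[ℂ] H)).topologicalClosure : Submodule ℂ H) :=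
    ((LinearMap.range (A : H →ₗ[ℂ] H)).isClosed_topologicalClosure).completeSpace_coe
  ((LinearMap.range (A : H →ₗ[ℂ] H)).topologicalClosure).subtypeL ∘L
    Submodule.orthogonalProjectionOnto (LinearMap.range (A : H →ₗ[ℂ] H)).topologicalClosure

section

omit [CompleteSpace H]

lemma anorm_nonneg (A : H →L[ℂ] H) (x : H) : 0 ≤ anorm A x :=
  Real.sqrt_nonneg _

lemma aNorm_nonneg (A T : H →L[ℂ] H) : 0 ≤ aNorm A T :=
  Real.sInf_nonneg fun _ hc => hc.1

lemma aNorm_le_of_forall {A T : H →L[ℂ] H} {c : ℝ} (hc : 0 ≤ c)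
    (h : ∀ x, anorm A (T x) ≤ c * anorm A x) : aNorm A T ≤ c :=
  csInf_le ⟨0, fun _ hd => hd.1⟩ ⟨hc, h⟩

namespace ABounded

variable {A T : H →L[ℂ] H}

lemma anorm_apply_le (hT : ABounded A T) (x : H) :
    anorm A (T x) ≤ aNorm A T * anorm A x := by
  obtain ⟨c, hc0, hc⟩ := hT
  rcases (anorm_nonneg A x).eq_or_lt with hx | hx
  · simpa [← hx] using hc x
  · rw [← div_le_iff₀ hx]
    exact le_csInf ⟨c, hc0.le, hc⟩ fun d hd => (div_le_iff₀ hx).2 (hd.2 x)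

lemma mul {S : H →L[ℂ] H} (hT : ABounded A T) (hS : ABounded A S) : ABounded A (T * S) := by
  obtain ⟨c, hc0, hc⟩ := hT
  obtain ⟨d, hd0, hd⟩ := hS
  refine ⟨c * d, mul_pos hc0 hd0, fun x => ?_⟩
  calc anorm A (T (S x)) ≤ c * anorm A (S x) := hc _
    _ ≤ c * (d * anorm A x) := mul_le_mul_of_nonneg_left (hd x) hc0.le
    _ = c * d * anorm A x := (mul_assoc _ _ _).symm

end ABounded

lemma aSpecRad_le_of_aNorm_pow_le {A S : H →L[ℂ] H} {K s : ℝ} (hK : 0 < K) (hs : 0 ≤ s)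
    (h : ∀ n : ℕ, aNorm A (S ^ n) ≤ K * s ^ n) : aSpecRad A S ≤ s := by
  have hroot : ∀ n : ℕ+, aSpecRad A S ≤ K ^ ((n : ℝ)⁻¹) * s := fun n => calc
    aSpecRad A S ≤ aNorm A (S ^ (n : ℕ)) ^ ((n : ℝ)⁻¹) :=
      ciInf_le ⟨0, by rintro _ ⟨m, rfl⟩; exact Real.rpow_nonneg (aNorm_nonneg _ _) _⟩ n
    _ ≤ (K * s ^ (n : ℕ)) ^ ((n : ℝ)⁻¹) :=
      Real.rpow_le_rpow (aNorm_nonneg _ _) (h n) (by positivity)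
    _ = K ^ ((n : ℝ)⁻¹) * s := by
      rw [Real.mul_rpow hK.le (pow_nonneg hs _), Real.pow_rpow_inv_natCast hs n.ne_zero]
  have hlim : Filter.Tendsto (fun m : ℕ => K ^ (((m + 1 : ℕ) : ℝ)⁻¹) * s)
      Filter.atTop (nhds s) := by
    have h0 : Filter.Tendsto (fun m : ℕ => ((m + 1 : ℕ) : ℝ)⁻¹) Filter.atTop (nhds 0) :=
      tendsto_inv_atTop_zero.comp
        (tendsto_natCast_atTop_atTop.comp (Filter.tendsto_add_atTop_nat 1))
    simpa using ((Real.continuousAt_const_rpow hK.ne').tendsto.comp h0).mul_const s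
  exact ge_of_tendsto hlim (Filter.Eventually.of_forall fun m => hroot ⟨m + 1, m.succ_pos⟩)

end

namespace ContinuousLinearMap.IsPositive

variable {A : H →L[ℂ] H}

lemma anorm_eq_norm_sqrt (hA : A.IsPositive) (x : H) : anorm A x = ‖CFC.sqrt A x‖ := by
  have hR : IsSelfAdjoint (CFC.sqrt A) :=
    ((nonneg_iff_isPositive _).1 (CFC.sqrt_nonneg A)).isSelfAdjoint
  have hx : A x = CFC.sqrt A (CFC.sqrt A x) := by
    conv_lhs => rw [← CFC.sqrt_mul_sqrt_self A ((nonneg_iff_isPositive A).2 hA)]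
    rfl
  rw [anorm, reApplyInnerSelf_apply, hx, ← hR.adjoint_eq, adjoint_inner_left, hR.adjoint_eq,
    inner_self_eq_norm_sq (𝕜 := ℂ), Real.sqrt_sq (norm_nonneg _)]

lemma anorm_add_le (hA : A.IsPositive) (x y : H) : anorm A (x + y) ≤ anorm A x + anorm A y := by
  simp only [hA.anorm_eq_norm_sqrt, map_add]
  exact norm_add_le _ _

lemma anorm_smul (hA : A.IsPositive) (c : ℂ) (x : H) : anorm A (c • x) = ‖c‖ * anorm A x := by
  simp only [hA.anorm_eq_norm_sqrt, map_smul, norm_smul]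

end ContinuousLinearMap.IsPositive

lemma projA_comp_self (A : H →L[ℂ] H) : projA A ∘L A = A := by
  ext x
  exact Submodule.starProjection_eq_self_iff.2 (Submodule.le_topologicalClosure _ ⟨x, rfl⟩)

lemma IsSelfAdjoint.comp_projA {A : H →L[ℂ] H} (hA : IsSelfAdjoint A) : A ∘L projA A = A := by
  have hP : IsSelfAdjoint (projA A) := isSelfAdjoint_starProjection _
  calc A ∘L projA A = adjoint (projA A ∘L A) := by rw [adjoint_comp, hP.adjoint_eq, hA.adjoint_eq]
    _ = A := by rw [projA_comp_self, hA.adjoint_eq]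

lemma adjoint_comp_comp_eq_of_comp_eq_projA {A U V : H →L[ℂ] H} (hA : IsSelfAdjoint A)
    (hV : A ∘L V = adjoint U ∘L A) (hVU : V ∘L U = projA A) : adjoint U ∘L A ∘L U = A :=
  calc adjoint U ∘L A ∘L U = A ∘L (V ∘L U) := by rw [← comp_assoc, ← hV, comp_assoc]
    _ = A := by rw [hVU, hA.comp_projA]

lemma anorm_apply_eq_of_adjoint_comp_comp {A U : H →L[ℂ] H} (hU : adjoint U ∘L A ∘L U = A)
    (x : H) : anorm A (U x) = anorm A x := by
  have h : adjoint U (A (U x)) = A x := congrArg (· x) hU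
  rw [anorm, anorm, reApplyInnerSelf_apply, reApplyInnerSelf_apply, ← adjoint_inner_left, h]

section

variable {A T U : H →L[ℂ] H} {ζ : ℂ}

/-- `K • (1, b)` dominates the pair `(‖x‖_A, ‖Tx‖_A)` and is an eigenvector of `[[a, 1], [b², a]]`
for the eigenvalue `a + b`. -/
lemma anorm_pow_mul_add_smul_mul_apply_le (hA : A.IsPositive)
    (hU : ∀ x, anorm A (U x) = anorm A x) (hζ : ‖ζ‖ ≤ 1) {a b K : ℝ} (ha : 0 ≤ a) (hb : 0 ≤ b)
    (hTa : ∀ x, anorm A (T x) ≤ a * anorm A x) (hTb : ∀ x, anorm A (T (T x)) ≤ b ^ 2 * anorm A x)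
    (hK : 1 ≤ K) (hKa : a ≤ K * b) (n : ℕ) :
    (∀ x, anorm A (((T * U + ζ • (U * T)) ^ n) x) ≤ K * (a + b) ^ n * anorm A x) ∧
      ∀ x, anorm A (((T * U + ζ • (U * T)) ^ n) (T x)) ≤ K * b * (a + b) ^ n * anorm A x := by
  set S := T * U + ζ • (U * T)
  have hK0 : 0 ≤ K := zero_le_one.trans hK
  have step : ∀ (R : H →L[ℂ] H) y,
      anorm A (R (S y)) ≤ anorm A (R (T (U y))) + anorm A (R (U (T y))) := by
    intro R y
    have hRS : R (S y) = R (T (U y)) + ζ • R (U (T y)) := by simp [S]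
    calc anorm A (R (S y)) ≤ anorm A (R (T (U y))) + ‖ζ‖ * anorm A (R (U (T y))) := by
          rw [hRS, ← hA.anorm_smul]; exact hA.anorm_add_le _ _
      _ ≤ anorm A (R (T (U y))) + anorm A (R (U (T y))) := by
          gcongr; exact mul_le_of_le_one_left (anorm_nonneg _ _) hζ
  induction n with
  | zero =>
    refine ⟨fun x => ?_, fun x => ?_⟩
    · simpa using mul_le_mul_of_nonneg_right hK (anorm_nonneg A x)
    · simpa using (hTa x).trans (mul_le_mul_of_nonneg_right hKa (anorm_nonneg A x))
  | succ n ih =>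
    obtain ⟨ih₁, ih₂⟩ := ih
    have hpow : ∀ y, (S ^ (n + 1)) y = (S ^ n) (S y) := fun y => by rw [pow_succ]; rfl
    refine ⟨fun x => ?_, fun x => ?_⟩
    · calc anorm A ((S ^ (n + 1)) x)
          ≤ anorm A ((S ^ n) (T (U x))) + anorm A ((S ^ n) (U (T x))) := hpow x ▸ step _ _
        _ ≤ K * b * (a + b) ^ n * anorm A (U x) + K * (a + b) ^ n * anorm A (U (T x)) :=
          add_le_add (ih₂ _) (ih₁ _)
        _ ≤ K * b * (a + b) ^ n * anorm A x + K * (a + b) ^ n * (a * anorm A x) := by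
          rw [hU, hU]; gcongr; exact hTa x
        _ = K * (a + b) ^ (n + 1) * anorm A x := by ring
    · calc anorm A ((S ^ (n + 1)) (T x))
          ≤ anorm A ((S ^ n) (T (U (T x)))) + anorm A ((S ^ n) (U (T (T x)))) :=
          hpow (T x) ▸ step _ _
        _ ≤ K * b * (a + b) ^ n * anorm A (U (T x)) + K * (a + b) ^ n * anorm A (U (T (T x))) :=
          add_le_add (ih₂ _) (ih₁ _)
        _ ≤ K * b * (a + b) ^ n * (a * anorm A x) + K * (a + b) ^ n * (b ^ 2 * anorm A x) := by
          rw [hU, hU]; gcongr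
          · exact hTa x
          · exact hTb x
        _ = K * b * (a + b) ^ (n + 1) * anorm A x := by ring

lemma aSpecRad_mul_add_smul_mul_le (hA : A.IsPositive) (hT : ABounded A T)
    (hU : ∀ x, anorm A (U x) = anorm A x) (hζ : ‖ζ‖ ≤ 1) :
    aSpecRad A (T * U + ζ • (U * T)) ≤ aNorm A T + √(aNorm A (T ^ 2)) := by
  refine le_of_forall_pos_le_add fun ε hε => ?_
  set a := aNorm A T
  set b := √(aNorm A (T ^ 2)) + ε
  have ha : 0 ≤ a := aNorm_nonneg _ _
  have hb : 0 < b := by positivity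
  have hTb : ∀ x, anorm A (T (T x)) ≤ b ^ 2 * anorm A x := fun x => calc
    anorm A (T (T x)) ≤ aNorm A (T ^ 2) * anorm A x := by
      rw [pow_two]; exact (hT.mul hT).anorm_apply_le x
    _ ≤ b ^ 2 * anorm A x := by
      refine mul_le_mul_of_nonneg_right ?_ (anorm_nonneg A x)
      calc aNorm A (T ^ 2) = √(aNorm A (T ^ 2)) ^ 2 := (Real.sq_sqrt (aNorm_nonneg _ _)).symm
        _ ≤ b ^ 2 := by gcongr; exact le_add_of_nonneg_right hε.le
  set K := max 1 (a / b)
  have hKa : a ≤ K * b := (div_le_iff₀ hb).1 (le_max_right _ _)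
  have hS := aSpecRad_le_of_aNorm_pow_le (K := K) (s := a + b) (by positivity) (by positivity)
    fun n => aNorm_le_of_forall (by positivity) (anorm_pow_mul_add_smul_mul_apply_le hA hU hζ
      ha hb.le hT.anorm_apply_le hTb (le_max_left _ _) hKa n).1
  linarith

end

theorem stmt11_general (A U Uadj T : H →L[ℂ] H) (hA : A.IsPositive)
    (hT : ABounded A T)
    (h1 : A ∘L Uadj = (ContinuousLinearMap.adjoint U) ∘L A)
    (hU1 : Uadj ∘L U = projA A) :
    aSpecRad A (T * U + U * T) ≤ aNorm A T + Real.sqrt (aNorm A (T ^ 2)) ∧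
      aSpecRad A (T * U - U * T) ≤ aNorm A T + Real.sqrt (aNorm A (T ^ 2)) := by
  have hU := anorm_apply_eq_of_adjoint_comp_comp
    (adjoint_comp_comp_eq_of_comp_eq_projA hA.isSelfAdjoint h1 hU1)
  constructor
  · simpa using aSpecRad_mul_add_smul_mul_le hA hT hU (ζ := 1) (by simp)
  · simpa [sub_eq_add_neg] using aSpecRad_mul_add_smul_mul_le hA hT hU (ζ := -1) (by simp)

/-- if `U` is `A`-unitary, i.e. `U` has a distinguished `A`-adjoint `U^♯`
(the solution of `A X = U* A` with range in `cl R(A)`), which in turn has a distinguished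
`A`-adjoint `(U^♯)^♯`, with `U^♯ U = (U^♯)^♯ U^♯ = P_A`, then
`r_A(TU ± UT) ≤ ‖T‖_A + ‖T²‖_A^{1/2}` for every `A`-bounded `T`. -/
theorem stmt11 (A U Uadj Uadj2 T : H →L[ℂ] H) (hA : A.IsPositive)
    (hT : ABounded A T)
    (h1 : A ∘L Uadj = (ContinuousLinearMap.adjoint U) ∘L A)
    (h1r : LinearMap.range (Uadj : H →ₗ[ℂ] H) ≤ (LinearMap.range (A : H →ₗ[ℂ] H)).topologicalClosure)
    (h2 : A ∘L Uadj2 = (ContinuousLinearMap.adjoint Uadj) ∘L A)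
    (h2r : LinearMap.range (Uadj2 : H →ₗ[ℂ] H) ≤ (LinearMap.range (A : H →ₗ[ℂ] H)).topologicalClosure)
    (hU1 : Uadj ∘L U = projA A) (hU2 : Uadj2 ∘L Uadj = projA A) :
    aSpecRad A (T * U + U * T) ≤ aNorm A T + Real.sqrt (aNorm A (T ^ 2)) ∧
      aSpecRad A (T * U - U * T) ≤ aNorm A T + Real.sqrt (aNorm A (T ^ 2)) :=
  stmt11_general A U Uadj T hA hT h1 hU1
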